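/- arXiv:1605.00813 — 8 statements merged into one kernel-verified Lean document; each statement's English description precedes it below -/
import Mathlib

section
/- Let (λ_n)_{n≥1} be the sequence in F_q defined by recursion (2). Then (λ_n)_{n≥1} is p-automatic, i.e., its p-kernel { (λ(p^i n + j))_{n≥1} : i ≥ 0, 0 ≤ j < p^i } is a finite set of sequences. -/
/-!
Extend `λ` to `ℤ` and allow integer offsets. For `i ≥ t` write
`p^i n + e = ℓ + 1 + r (p^(i-t) n + q) + j` with `0 ≤ j < r`: by the recursion the sequence
`n ↦ λ(p^i n + e)` is, for large `n`, constant `β_j` if `j ≠ 0`, and otherwise a twist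
`n ↦ Φ (n mod k) (λ(p^(i-t) n + q + 1))` of a kernel sequence with smaller exponent. Offsets stay in
`[-(ℓ+1), p^i + ℓ + 1]`, so descending to exponents below `t` shows that every kernel sequence agrees
from `n = ℓ + 2` on with a twist of one of finitely many sequences; there are finitely many such
twists and finitely many initial segments.
-/

open Set

theorem Set.Finite.setOf_exists_eqOn_Ici {β : Type*} [Finite β] {W : Set (ℕ → β)}
    (hW : W.Finite) (N : ℕ) : {u : ℕ → β | ∃ w ∈ W, EqOn u w (Ici N)}.Finite := by
  have : Finite W := hW.to_subtype
  refine (finite_range fun x : (Fin N → β) × W =>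
    fun n => if h : n < N then x.1 ⟨n, h⟩ else x.2.1 n).subset ?_
  rintro u ⟨w, hw, huw⟩
  refine ⟨(fun n => u n, ⟨w, hw⟩), funext fun n => ?_⟩
  dsimp only
  split_ifs with h
  · rfl
  · exact (huw (not_lt.mp h)).symm

theorem Set.Finite.setOf_twist {F : Type*} [Finite F] {k : ℕ} [NeZero k] {V : Set (ℕ → F)}
    (hV : V.Finite) :
    {w : ℕ → F | ∃ Φ : ZMod k → F → F, ∃ v ∈ V, w = fun n : ℕ => Φ n (v n)}.Finite := by
  have : Finite V := hV.to_subtype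
  refine (finite_range fun x : (ZMod k → F → F) × V => fun n : ℕ => x.1 n (x.2.1 n)).subset ?_
  rintro w ⟨Φ, v, hv, rfl⟩
  exact ⟨(Φ, ⟨v, hv⟩), rfl⟩

theorem sub_ediv_add_one_mem_Icc {a r P e : ℤ} (ha : 1 ≤ a) (hr : 2 ≤ r)
    (he : e ∈ Icc (-a) (r * P + a)) : (e - a) / r + 1 ∈ Icc (-a) (P + a) := by
  have hdiv := Int.mul_ediv_add_emod (e - a) r
  have hmod_nonneg := Int.emod_nonneg (e - a) (by omega : r ≠ 0)
  have hmod_lt := Int.emod_lt_of_pos (e - a) (by omega : 0 < r)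
  obtain ⟨he₁, he₂⟩ := he
  constructor
  · by_contra! h
    nlinarith
  · by_contra! h
    nlinarith

theorem exists_twist_of_recursion {F : Type*} {L : ℤ → F} {p t r k ℓ : ℕ}
    {Ψ : ZMod k → F → F} {β : ℤ → F} (hp : 1 < p) (ht : 0 < t) (hr : r = p ^ t)
    (hΨ : ∀ m : ℤ, 0 ≤ m → L (ℓ + 1 + r * m) = Ψ m (L (m + 1)))
    (hβ : ∀ m j : ℤ, 0 ≤ m → 0 < j → j < r → L (ℓ + 1 + r * m + j) = β j)
    (i : ℕ) (e : ℤ) (he : e ∈ Icc (-(ℓ + 1 : ℤ)) (p ^ i + (ℓ + 1))) :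
    ∃ c < t, ∃ e' ∈ Icc (-(ℓ + 1 : ℤ)) (p ^ c + (ℓ + 1)), ∃ Φ : ZMod k → F → F,
      ∀ n : ℕ, ℓ + 2 ≤ n → L (p ^ i * n + e) = Φ n (L (p ^ c * n + e')) := by
  induction i using Nat.strong_induction_on generalizing e with
  | _ i ih =>
  by_cases hit : i < t
  · exact ⟨i, hit, e, he, fun _ x => x, fun _ _ => rfl⟩
  obtain ⟨i, rfl⟩ := Nat.exists_eq_add_of_le (not_lt.mp hit)
  have hr2 : (2 : ℤ) ≤ r := by
    rw [hr]; exact_mod_cast (Nat.pow_le_pow_left hp t).trans' (Nat.le_self_pow ht.ne' 2)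
  have hpow : (p : ℤ) ^ (t + i) = r * p ^ i := by rw [hr, pow_add]; push_cast; rfl
  set q := (e - (ℓ + 1)) / r
  set j := (e - (ℓ + 1)) % r
  have hq : q + 1 ∈ Icc (-(ℓ + 1 : ℤ)) (p ^ i + (ℓ + 1)) :=
    sub_ediv_add_one_mem_Icc (by omega) hr2 (by rwa [← hpow])
  have hX (n : ℕ) (hn : ℓ + 2 ≤ n) : 0 ≤ (p : ℤ) ^ i * n + q := by
    have : (n : ℤ) ≤ p ^ i * n :=
      le_mul_of_one_le_left (by positivity) (one_le_pow₀ (by exact_mod_cast hp.le))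
    have : (ℓ + 2 : ℤ) ≤ n := by exact_mod_cast hn
    linarith [hq.1]
  have hdecomp (n : ℕ) : (p : ℤ) ^ (t + i) * n + e = ℓ + 1 + r * (p ^ i * n + q) + j := by
    linear_combination hpow * n - Int.mul_ediv_add_emod (e - (ℓ + 1)) r
  by_cases hj : j = 0
  · obtain ⟨c, hc, e', he', Φ, hΦ⟩ := ih i (by omega) (q + 1) hq
    refine ⟨c, hc, e', he', fun z x => Ψ (p ^ i * z + q) (Φ z x), fun n hn => ?_⟩
    rw [hdecomp, hj, add_zero, hΨ _ (hX n hn), add_assoc, hΦ n hn]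
    push_cast
    rfl
  · refine ⟨0, ht, 0, ⟨by omega, by positivity⟩, fun _ _ => β j, fun n hn => ?_⟩
    rw [hdecomp]
    exact hβ _ _ (hX n hn) (lt_of_le_of_ne (Int.emod_nonneg _ (by omega)) (Ne.symm hj))
      (Int.emod_lt_of_pos _ (by omega))

theorem toNat_recursion_mul_pow {F : Type*} [Monoid F] {lam α : ℕ → F} {ℓ k r : ℕ}
    (hk : k ≠ 0)
    (hrec : ∀ m i : ℕ, i < k →
      lam (ℓ + 1 + r * (k * m + i)) = α (i + 1) * lam (k * m + i + 1) ^ r)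
    (m : ℤ) (hm : 0 ≤ m) :
    lam (ℓ + 1 + r * m).toNat = α ((m : ZMod k).val + 1) * lam (m + 1).toNat ^ r := by
  lift m to ℕ using hm
  have := hrec (m / k) (m % k) (Nat.mod_lt _ (Nat.pos_of_ne_zero hk))
  rw [Nat.div_add_mod] at this
  rw [Int.cast_natCast, ZMod.val_natCast]
  exact_mod_cast this

theorem toNat_recursion_const {F : Type*} {lam β : ℕ → F} {ℓ r : ℕ}
    (hrec : ∀ m j : ℕ, 1 ≤ j → j < r → lam (ℓ + 1 + r * m + j) = β j)
    (m j : ℤ) (hm : 0 ≤ m) (hj : 0 < j) (hjr : j < r) :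
    lam (ℓ + 1 + r * m + j).toNat = β j.toNat := by
  lift m to ℕ using hm
  lift j to ℕ using hj.le
  exact_mod_cast hrec m j (by omega) (by omega)

theorem recurrence_p_automatic_general {F : Type*} [Field F] [Fintype F]
    (p t : ℕ) (hp : p.Prime) (ht : 1 ≤ t)
    (r : ℕ) (hr : r = p ^ t)
    (ℓ k : ℕ) (hk : 1 ≤ k)
    (lam α β : ℕ → F)
    (hrec1 : ∀ m i : ℕ, i < k →
      lam (ℓ + 1 + r * (k * m + i)) = α (i + 1) * (lam (k * m + i + 1)) ^ r)
    (hrec2 : ∀ m j : ℕ, 1 ≤ j → j < r → lam (ℓ + 1 + r * m + j) = β j) :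
    Set.Finite {u : ℕ → F | ∃ i j : ℕ, j < p ^ i ∧ u = fun n => lam (p ^ i * n + j)} := by
  have : NeZero k := ⟨by omega⟩
  set L : ℤ → F := fun z => lam z.toNat
  have hL (n : ℕ) : L n = lam n := congrArg lam (Int.toNat_natCast n)
  have hreduce := exists_twist_of_recursion (L := L) (Ψ := fun z x => α (z.val + 1) * x ^ r)
    hp.one_lt ht hr (toNat_recursion_mul_pow (NeZero.ne k) hrec1) (toNat_recursion_const hrec2)
  let V : Set (ℕ → F) := (fun ce : ℕ × ℤ => fun n : ℕ => L (p ^ ce.1 * n + ce.2)) ''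
    Iio t ×ˢ Icc (-(ℓ + 1 : ℤ)) (p ^ t + (ℓ + 1))
  have hV : V.Finite := ((finite_Iio t).prod (finite_Icc _ _)).image _
  refine (hV.setOf_twist (k := k)).setOf_exists_eqOn_Ici (ℓ + 2) |>.subset ?_
  rintro u ⟨i, j, hj, rfl⟩
  obtain ⟨c, hc, e', he', Φ, hΦ⟩ :=
    hreduce i j ⟨by omega, by exact_mod_cast (by omega : j ≤ p ^ i + (ℓ + 1))⟩
  refine ⟨_, ⟨Φ, _, ⟨(c, e'), ⟨hc, he'.1, he'.2.trans ?_⟩, rfl⟩, rfl⟩, fun n hn => ?_⟩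
  · gcongr
    exact_mod_cast hp.one_le
  · exact (hL _).symm.trans (mod_cast hΦ n hn)

/-- Theorem 2 of the paper (automaticity part). Let `(λ_n)_{n ≥ 1}` in `F_q` be defined
by recursion (2): for all `m ≥ 0` and `0 ≤ i < k`, `λ_{ℓ+1+r(km+i)} = α_{i+1} (λ_{km+i+1})^r`,
and for `1 ≤ j < r`, `λ_{ℓ+1+rm+j} = β_j`. Then `(λ_n)_{n ≥ 1}` is `p`-automatic, i.e. its
`p`-kernel `{ (λ (p^i n + j))_{n ≥ 1} : i ≥ 0, 0 ≤ j < p^i }` is a finite set of sequences. -/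
theorem recurrence_p_automatic {F : Type*} [Field F] [Fintype F]
    (p s t : ℕ) (hp : p.Prime) (hs : 1 ≤ s) (ht : 1 ≤ t)
    (hcard : Fintype.card F = p ^ s)
    (r : ℕ) (hr : r = p ^ t)
    (ℓ k : ℕ) (hℓ : 1 ≤ ℓ) (hk : 1 ≤ k) (hkr : k ∣ r)
    (lam α β : ℕ → F)
    (hα : ∀ i, 1 ≤ i → i ≤ k → α i ≠ 0)
    (hrec1 : ∀ m i : ℕ, i < k →
      lam (ℓ + 1 + r * (k * m + i)) = α (i + 1) * (lam (k * m + i + 1)) ^ r)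
    (hrec2 : ∀ m j : ℕ, 1 ≤ j → j < r → lam (ℓ + 1 + r * m + j) = β j) :
    Set.Finite {u : ℕ → F | ∃ i j : ℕ, j < p ^ i ∧ u = fun n => lam (p ^ i * n + j)} :=
  recurrence_p_automatic_general p t hp ht r hr ℓ k hk lam α β hrec1 hrec2
end

section
/- Let (λ_n)_{n≥1} be the sequence in F_q defined by recursion (2), let F = { ℓ + rn + i : n ≥ 0, 2 ≤ i ≤ r } and ρ_1 = ∑_{n∈F} λ_n X^n ∈ F_q[[X]]. Then (1 − X)^r · ρ_1 = ∑_{j=1}^{r−1} β_j X^{ℓ+1+j} in F_q[[X]]. -/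
open scoped Classical

/-!
In characteristic `p` the Frobenius gives `(1 - X)^r = 1 - X^r`. Writing `n = ℓ + 1 + d`, the set
`F` is exactly the set of `n` with `d % r ≠ 0`, and there the second half of recursion (2) gives
`λ_n = β_{d % r}`. So `ρ₁ = X^(ℓ+1) σ` with `σ` an `r`-periodic power series, and multiplying a
periodic series by `1 - X^r` leaves only its first period.
-/

theorem exists_two_le_le_and_eq_add_mul_add_iff {ℓ r d : ℕ} (hr : 0 < r) :
    (∃ m i : ℕ, 2 ≤ i ∧ i ≤ r ∧ ℓ + 1 + d = ℓ + r * m + i) ↔ d % r ≠ 0 := by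
  have hdiv := Nat.div_add_mod d r
  have hlt := Nat.mod_lt d hr
  constructor
  · rintro ⟨m, i, hi2, hir, hd⟩
    have hd' : d = r * m + (i - 1) := by omega
    rw [hd', Nat.mul_add_mod, Nat.mod_eq_of_lt (by omega)]
    omega
  · intro hd
    exact ⟨d / r, d % r + 1, by omega, by omega, by omega⟩

namespace PowerSeries

theorem one_sub_X_pow_mul_mk_mod {R : Type*} [Ring R] (r : ℕ) (b : ℕ → R) :
    (1 - X ^ r) * mk (fun n => b (n % r)) = ∑ j ∈ Finset.range r, C (b j) * X ^ j := by
  ext d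
  simp only [sub_mul, one_mul, map_sub, coeff_X_pow_mul', coeff_mk, map_sum, coeff_C_mul,
    coeff_X_pow, mul_ite, mul_one, mul_zero, Finset.sum_ite_eq, Finset.mem_range]
  by_cases hd : r ≤ d
  · rw [if_pos hd, if_neg (by omega), ← Nat.mod_eq_sub_mod hd, sub_self]
  · rw [if_neg hd, if_pos (by omega), Nat.mod_eq_of_lt (by omega), sub_zero]

theorem mk_ite_exists_eq_X_pow_mul_mk_mod {R : Type*} [Semiring R] {ℓ r : ℕ} (hr : 0 < r)
    {lam β : ℕ → R} (hrec : ∀ m j : ℕ, 1 ≤ j → j < r → lam (ℓ + 1 + r * m + j) = β j) :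
    (mk fun n => if ∃ m i : ℕ, 2 ≤ i ∧ i ≤ r ∧ n = ℓ + r * m + i then lam n else 0) =
      X ^ (ℓ + 1) * mk fun d => if d % r = 0 then 0 else β (d % r) := by
  ext n
  rw [coeff_X_pow_mul', coeff_mk]
  by_cases hn : ℓ + 1 ≤ n
  · obtain ⟨d, rfl⟩ := Nat.exists_eq_add_of_le hn
    rw [if_pos hn, coeff_mk, Nat.add_sub_cancel_left, exists_two_le_le_and_eq_add_mul_add_iff hr]
    by_cases hd : d % r = 0
    · simp [hd]
    · have hlam := hrec (d / r) (d % r) (Nat.pos_of_ne_zero hd) (Nat.mod_lt d hr)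
      rw [add_assoc, Nat.div_add_mod] at hlam
      simp [hd, hlam]
  · rw [if_neg hn, if_neg fun ⟨m, i, hi, _, hn'⟩ => hn (by omega)]

end PowerSeries

theorem recurrence_rho_one_general {F : Type*} [Field F] [Fintype F]
    (p s t : ℕ) (hp : p.Prime)
    (hcard : Fintype.card F = p ^ s)
    (r : ℕ) (hr : r = p ^ t)
    (ℓ : ℕ)
    (lam β : ℕ → F)
    (hrec2 : ∀ m j : ℕ, 1 ≤ j → j < r → lam (ℓ + 1 + r * m + j) = β j)
    (ρ₁ : PowerSeries F)
    (hρ₁ : ρ₁ = PowerSeries.mk fun n =>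
      if ∃ m i : ℕ, 2 ≤ i ∧ i ≤ r ∧ n = ℓ + r * m + i then lam n else 0) :
    (1 - PowerSeries.X) ^ r * ρ₁ =
      ∑ j ∈ Finset.Ico 1 r, PowerSeries.C (β j) * PowerSeries.X ^ (ℓ + 1 + j) := by
  have : Fact p.Prime := ⟨hp⟩
  have : CharP F p := charP_of_card_eq_prime_pow hcard
  have : CharP (PowerSeries F) p := charP_of_injective_algebraMap' F p
  have hr0 : 0 < r := hr ▸ pow_pos hp.pos t
  have hfrob : (1 - PowerSeries.X : PowerSeries F) ^ r = 1 - PowerSeries.X ^ r := by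
    rw [hr, sub_pow_char_pow, one_pow]
  rw [hρ₁, PowerSeries.mk_ite_exists_eq_X_pow_mul_mk_mod hr0 hrec2, hfrob, mul_left_comm,
    PowerSeries.one_sub_X_pow_mul_mk_mod r fun j => if j = 0 then 0 else β j,
    Finset.sum_range_eq_add_Ico _ hr0, if_pos rfl, map_zero, zero_mul, zero_add, Finset.mul_sum]
  refine Finset.sum_congr rfl fun j hj => ?_
  rw [if_neg (Nat.one_le_iff_ne_zero.mp (Finset.mem_Ico.mp hj).1), pow_add]
  ring

/-- Equation (4) of the paper (in the variable `X = 1/T`, before raising to the power `r`).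
Let `(λ_n)_{n ≥ 1}` in `F_q` be defined by recursion (2), let
`F = { ℓ + rn + i : n ≥ 0, 2 ≤ i ≤ r }` and `ρ₁ = ∑_{n ∈ F} λ_n X^n`. Then
`(1 - X)^r * ρ₁ = ∑_{j=1}^{r-1} β_j X^(ℓ+1+j)` in `F_q[[X]]`. -/
theorem recurrence_rho_one {F : Type*} [Field F] [Fintype F]
    (p s t : ℕ) (hp : p.Prime) (hs : 1 ≤ s) (ht : 1 ≤ t)
    (hcard : Fintype.card F = p ^ s)
    (r : ℕ) (hr : r = p ^ t)
    (ℓ k : ℕ) (hℓ : 1 ≤ ℓ) (hk : 1 ≤ k) (hkr : k ∣ r)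
    (lam α β : ℕ → F)
    (hα : ∀ i, 1 ≤ i → i ≤ k → α i ≠ 0)
    (hrec1 : ∀ m i : ℕ, i < k →
      lam (ℓ + 1 + r * (k * m + i)) = α (i + 1) * (lam (k * m + i + 1)) ^ r)
    (hrec2 : ∀ m j : ℕ, 1 ≤ j → j < r → lam (ℓ + 1 + r * m + j) = β j)
    (ρ₁ : PowerSeries F)
    (hρ₁ : ρ₁ = PowerSeries.mk fun n =>
      if ∃ m i : ℕ, 2 ≤ i ∧ i ≤ r ∧ n = ℓ + r * m + i then lam n else 0) :
    (1 - PowerSeries.X) ^ r * ρ₁ =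
      ∑ j ∈ Finset.Ico 1 r, PowerSeries.C (β j) * PowerSeries.X ^ (ℓ + 1 + j) :=
  recurrence_rho_one_general p s t hp hcard r hr ℓ lam β hrec2 ρ₁ hρ₁
end

section
/- Let (λ_n)_{n≥1} be the sequence in F_q defined by recursion (2), let (α_n)_{n≥1} be the purely k-periodic extension of (α_1,…,α_k), and let F = { ℓ + rn + i : n ≥ 0, 2 ≤ i ≤ r }. Then in F_q[[X]] one has (1 − X)^{r²} · ∑_{n∈F} α_n (λ_n)^r X^{rn} = ∑_{j=1}^{r−1} α_{ℓ+1+j} (β_j)^r X^{r(ℓ+1+j)}. -/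
/-!
In characteristic `p` the Frobenius gives `(1 - X)^{r²} = 1 - X^{r²}`, and the series only
involves the powers `X^{rn}`, so everything is the expansion `X ↦ X^r` of the identity
`(1 - X^r) T = ∑_{j=1}^{r-1} α_{ℓ+1+j} β_j^r X^{ℓ+1+j}` for `T = ∑_{n ∈ F} α_n λ_n^r X^n`.
The coefficients of `T` vanish below `ℓ + 1` and are `r`-periodic from there on: `F` is stable
under `n ↦ n ± r` above `ℓ`, `α` is `k`-periodic with `k ∣ r`, and on `F` the recursion gives
`λ_n = λ_{n+r} = β_j`. Multiplying by `1 - X^r` therefore leaves one period of `T`, namely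
`ℓ < n ≤ ℓ + r`, in which only `n = ℓ + 1` lies outside `F`.
-/

open scoped Classical

open PowerSeries

namespace PowerSeries

variable {R : Type*}

theorem one_sub_X_pow_mul_mk_eq_sum [Ring R] {c : ℕ → R} {a N : ℕ}
    (hzero : ∀ n < a, c n = 0) (hper : ∀ n, a ≤ n → c (n + N) = c n) :
    (1 - X ^ N) * mk c = ∑ n ∈ Finset.Ico a (a + N), C (c n) * X ^ n := by
  ext m
  simp only [sub_mul, one_mul, map_sub, coeff_X_pow_mul', coeff_mk, map_sum, coeff_C_mul_X_pow,
    Finset.sum_ite_eq, Finset.mem_Ico]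
  split_ifs with hN hwin hwin
  · rw [hzero (m - N) (by omega), sub_zero]
  · by_cases ha : a ≤ m
    · rw [← hper (m - N) (by omega), Nat.sub_add_cancel hN, sub_self]
    · rw [hzero m (by omega), hzero (m - N) (by omega), sub_zero]
  · rw [sub_zero]
  · rw [sub_zero, hzero m (by omega)]

theorem one_sub_X_pow_char_pow [CommRing R] (p : ℕ) [Fact p.Prime] [CharP R p] (n : ℕ) :
    (1 - X : R⟦X⟧) ^ p ^ n = 1 - X ^ p ^ n := by
  have : CharP R⟦X⟧ p := charP_of_injective_ringHom C_injective p
  rw [sub_pow_char_pow, one_pow]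

end PowerSeries

theorem Nat.add_mul_eq_of_add_eq {α : Type*} {f : ℕ → α} {a k : ℕ}
    (h : ∀ n, a ≤ n → f (n + k) = f n) {n : ℕ} (hn : a ≤ n) (c : ℕ) : f (n + k * c) = f n := by
  induction c with
  | zero => simp
  | succ c ih => rw [Nat.mul_succ, ← Nat.add_assoc, h _ (by omega), ih]

/-- The set `F` of the statement: the indices `ℓ + 1 + r m + j` with `1 ≤ j < r`, at which
recursion (2) sets `λ` to `β_j`. -/
def betaIndices (r ℓ : ℕ) : Set ℕ := {n | ∃ m i, 2 ≤ i ∧ i ≤ r ∧ n = ℓ + r * m + i}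

section betaIndices

variable {r ℓ n : ℕ}

theorem notMem_betaIndices_of_lt (hn : n < ℓ + 2) : n ∉ betaIndices r ℓ := by
  rintro ⟨m, i, hi, -, rfl⟩
  omega

theorem add_mem_betaIndices (j : ℕ) (hj : 1 ≤ j) (hjr : j < r) :
    ℓ + 1 + j ∈ betaIndices r ℓ :=
  ⟨0, j + 1, by omega, hjr, by ring⟩

theorem add_mem_betaIndices_iff (hn : ℓ + 1 ≤ n) :
    n + r ∈ betaIndices r ℓ ↔ n ∈ betaIndices r ℓ := by
  constructor
  · rintro ⟨m, i, hi, hir, hnm⟩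
    obtain _ | m := m
    · omega
    · exact ⟨m, i, hi, hir, by rw [mul_add_one] at hnm; omega⟩
  · rintro ⟨m, i, hi, hir, rfl⟩
    exact ⟨m + 1, i, hi, hir, by ring⟩

variable {F : Type*} {lam β : ℕ → F}

theorem lam_add_of_mem_betaIndices
    (hrec2 : ∀ m j : ℕ, 1 ≤ j → j < r → lam (ℓ + 1 + r * m + j) = β j)
    (hn : n ∈ betaIndices r ℓ) : lam (n + r) = lam n := by
  obtain ⟨m, _ | j, hi, hir, rfl⟩ := hn
  · omega
  calc lam (ℓ + r * m + (j + 1) + r) = lam (ℓ + 1 + r * (m + 1) + j) := congrArg lam (by ring)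
    _ = lam (ℓ + 1 + r * m + j) := by rw [hrec2 _ _ (by omega) hir, hrec2 _ _ (by omega) (by omega)]
    _ = lam (ℓ + r * m + (j + 1)) := congrArg lam (by ring)

end betaIndices

section Coefficients

variable {F : Type*} [Semiring F] {r ℓ : ℕ} {lam αe β : ℕ → F}

theorem indicator_betaIndices_add
    (hαe : ∀ n, 1 ≤ n → αe (n + r) = αe n)
    (hrec2 : ∀ m j : ℕ, 1 ≤ j → j < r → lam (ℓ + 1 + r * m + j) = β j)
    {n : ℕ} (hn : ℓ + 1 ≤ n) :
    (betaIndices r ℓ).indicator (fun n => αe n * lam n ^ r) (n + r) =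
      (betaIndices r ℓ).indicator (fun n => αe n * lam n ^ r) n := by
  by_cases hmem : n ∈ betaIndices r ℓ
  · rw [Set.indicator_of_mem ((add_mem_betaIndices_iff hn).2 hmem), Set.indicator_of_mem hmem,
      hαe n (by omega), lam_add_of_mem_betaIndices hrec2 hmem]
  · rw [Set.indicator_of_notMem (mt (add_mem_betaIndices_iff hn).1 hmem),
      Set.indicator_of_notMem hmem]

theorem sum_Ico_indicator_betaIndices (hr : 0 < r)
    (hrec2 : ∀ m j : ℕ, 1 ≤ j → j < r → lam (ℓ + 1 + r * m + j) = β j) :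
    ∑ n ∈ Finset.Ico (ℓ + 1) (ℓ + 1 + r),
        C ((betaIndices r ℓ).indicator (fun n => αe n * lam n ^ r) n) * X ^ n =
      ∑ j ∈ Finset.Ico 1 r, C (αe (ℓ + 1 + j) * β j ^ r) * X ^ (ℓ + 1 + j) := by
  rw [Finset.sum_eq_sum_Ico_succ_bot (by omega),
    Set.indicator_of_notMem (notMem_betaIndices_of_lt (by omega)), map_zero,
    zero_mul, zero_add, add_comm (ℓ + 1) 1, add_comm (ℓ + 1) r, ← Finset.sum_Ico_add']
  refine Finset.sum_congr rfl fun j hj => ?_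
  obtain ⟨hj1, hjr⟩ := Finset.mem_Ico.1 hj
  rw [add_comm j, Set.indicator_of_mem (add_mem_betaIndices j hj1 hjr), ← hrec2 0 j hj1 hjr,
    mul_zero, add_zero]

end Coefficients

theorem expand_mk_indicator_betaIndices {F : Type*} [CommRing F] {r : ℕ} (hr : 0 < r) (ℓ : ℕ)
    (g : ℕ → F) :
    expand r hr.ne' (mk ((betaIndices r ℓ).indicator g)) = mk fun m =>
      if ∃ m' i : ℕ, 2 ≤ i ∧ i ≤ r ∧ m = r * (ℓ + r * m' + i) then g (m / r) else 0 := by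
  ext m
  rw [coeff_expand, coeff_mk, coeff_mk]
  by_cases hdvd : r ∣ m
  · obtain ⟨n, rfl⟩ := hdvd
    rw [if_pos (dvd_mul_right r n), Nat.mul_div_cancel_left n hr, Set.indicator_apply]
    simp only [Nat.mul_left_cancel_iff hr]
    rfl
  · rw [if_neg hdvd, if_neg]
    rintro ⟨m', i, -, -, rfl⟩
    exact hdvd (dvd_mul_right _ _)

theorem recurrence_F_part_general {F : Type*} [Field F] [Fintype F]
    (p s t : ℕ) (hp : p.Prime)
    (hcard : Fintype.card F = p ^ s)
    (r : ℕ) (hr : r = p ^ t)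
    (ℓ k : ℕ) (hkr : k ∣ r)
    (lam β : ℕ → F)
    (hrec2 : ∀ m j : ℕ, 1 ≤ j → j < r → lam (ℓ + 1 + r * m + j) = β j)
    (αe : ℕ → F)
    (hαe₂ : ∀ n, 1 ≤ n → αe (n + k) = αe n)
    (S : PowerSeries F)
    (hS : S = PowerSeries.mk fun m =>
      if ∃ m' i : ℕ, 2 ≤ i ∧ i ≤ r ∧ m = r * (ℓ + r * m' + i) then
        αe (m / r) * (lam (m / r)) ^ r else 0) :
    (1 - PowerSeries.X) ^ (r ^ 2) * S =
      ∑ j ∈ Finset.Ico 1 r,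
        PowerSeries.C (αe (ℓ + 1 + j) * (β j) ^ r) * PowerSeries.X ^ (r * (ℓ + 1 + j)) := by
  have hr0 : 0 < r := hr ▸ pow_pos hp.pos t
  have : Fact p.Prime := ⟨hp⟩
  have : CharP F p := charP_of_card_eq_prime_pow hcard
  have hαe : ∀ n, 1 ≤ n → αe (n + r) = αe n := by
    obtain ⟨d, rfl⟩ := hkr
    exact fun n hn => Nat.add_mul_eq_of_add_eq hαe₂ hn d
  have hfrob : (1 - X : F⟦X⟧) ^ (r ^ 2) = expand r hr0.ne' (1 - X ^ r) := by
    rw [map_sub, map_one, map_pow, expand_X, ← pow_mul, ← sq, hr, ← pow_mul,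
      one_sub_X_pow_char_pow]
  have hperiod : (1 - X ^ r) * mk ((betaIndices r ℓ).indicator fun n => αe n * lam n ^ r) =
      ∑ j ∈ Finset.Ico 1 r, C (αe (ℓ + 1 + j) * β j ^ r) * X ^ (ℓ + 1 + j) := by
    rw [one_sub_X_pow_mul_mk_eq_sum (a := ℓ + 1)
      (fun n hn => Set.indicator_of_notMem (notMem_betaIndices_of_lt (by omega)) _)
      (fun n hn => indicator_betaIndices_add hαe hrec2 hn), sum_Ico_indicator_betaIndices hr0 hrec2]
  rw [hS, ← expand_mk_indicator_betaIndices hr0 ℓ fun n => αe n * lam n ^ r, hfrob, ← map_mul,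
    hperiod, map_sum]
  simp only [map_mul, expand_C, map_pow, expand_X, ← pow_mul]

/-- Equation (4) of the paper (in the variable `X = 1/T`). Let `(λ_n)_{n ≥ 1}` in `F_q` be
defined by recursion (2), let `(αe_n)_{n ≥ 1}` be the purely `k`-periodic extension of
`(α_1, …, α_k)`, and let `F = { ℓ + rn + i : n ≥ 0, 2 ≤ i ≤ r }`. Then in `F_q[[X]]`:
`(1 - X)^(r²) * ∑_{n ∈ F} αe_n (λ_n)^r X^(rn) = ∑_{j=1}^{r-1} αe_{ℓ+1+j} (β_j)^r X^(r(ℓ+1+j))`.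
The series `∑_{n ∈ F} αe_n (λ_n)^r X^(rn)` is encoded by its coefficients: the coefficient of
`X^m` is `αe_{m/r} (λ_{m/r})^r` if `m = rn` for some `n ∈ F`, and `0` otherwise. -/
theorem recurrence_F_part {F : Type*} [Field F] [Fintype F]
    (p s t : ℕ) (hp : p.Prime) (hs : 1 ≤ s) (ht : 1 ≤ t)
    (hcard : Fintype.card F = p ^ s)
    (r : ℕ) (hr : r = p ^ t)
    (ℓ k : ℕ) (hℓ : 1 ≤ ℓ) (hk : 1 ≤ k) (hkr : k ∣ r)
    (lam α β : ℕ → F)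
    (hα : ∀ i, 1 ≤ i → i ≤ k → α i ≠ 0)
    (hrec1 : ∀ m i : ℕ, i < k →
      lam (ℓ + 1 + r * (k * m + i)) = α (i + 1) * (lam (k * m + i + 1)) ^ r)
    (hrec2 : ∀ m j : ℕ, 1 ≤ j → j < r → lam (ℓ + 1 + r * m + j) = β j)
    (αe : ℕ → F)
    (hαe₁ : ∀ i, 1 ≤ i → i ≤ k → αe i = α i)
    (hαe₂ : ∀ n, 1 ≤ n → αe (n + k) = αe n)
    (S : PowerSeries F)
    (hS : S = PowerSeries.mk fun m =>
      if ∃ m' i : ℕ, 2 ≤ i ∧ i ≤ r ∧ m = r * (ℓ + r * m' + i) then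
        αe (m / r) * (lam (m / r)) ^ r else 0) :
    (1 - PowerSeries.X) ^ (r ^ 2) * S =
      ∑ j ∈ Finset.Ico 1 r,
        PowerSeries.C (αe (ℓ + 1 + j) * (β j) ^ r) * PowerSeries.X ^ (r * (ℓ + 1 + j)) :=
  recurrence_F_part_general p s t hp hcard r hr ℓ k hkr lam β hrec2 αe hαe₂ S hS
end

section
/- Let (λ_n)_{n≥1} be the sequence in F_q defined by recursion (1). Then (λ_n)_{n≥1} is 2-automatic, i.e., its 2-kernel { (λ(2^i n + j))_{n≥1} : i ≥ 0, 0 ≤ j < 2^i } is a finite set of sequences. -/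
/-! For `1 ≤ k ≤ r`, recursion (1) writes `λ (ℓ + r m + k)` as a map `F → F`, depending only on
`k` and the parity of `m`, applied to `λ (m + 1)`. As `r = 2 ^ t`, for `i ≥ 1` the kernel sequence
`n ↦ λ (2 ^ (i + t) n + j)` is therefore, for `n > ℓ`, a fixed map applied to `n ↦ λ (2 ^ i n + j')`,
where `j'` stays in a window independent of `i`. Iterating, every kernel sequence agrees for `n > ℓ`
with `G (λ (2 ^ i₀ n + j₀))` for some `G : F → F`, `i₀ ≤ t` and `j₀` in that window. As `F` is finite,
there are only finitely many such tails, and finitely many choices of the first `ℓ + 1` terms. -/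

def seqKernel {α : Type*} (b : ℕ) (u : ℕ → α) : Set (ℕ → α) :=
  {v | ∃ i j : ℕ, j < b ^ i ∧ v = fun n => u (b ^ i * n + j)}

theorem Set.Finite.of_forall_exists_tail_eq {α ι : Type*} [Finite α] [Finite ι]
    {S : Set (ℕ → α)} (N : ℕ) (φ : ι → ℕ → α)
    (h : ∀ u ∈ S, ∃ k, ∀ n, N ≤ n → u n = φ k n) : S.Finite := by
  refine (Set.finite_range fun p : (Fin N → α) × ι =>
    fun n => if hn : n < N then p.1 ⟨n, hn⟩ else φ p.2 n).subset ?_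
  intro u hu
  obtain ⟨k, hk⟩ := h u hu
  refine ⟨(fun n => u n, k), funext fun n => ?_⟩
  show (if hn : n < N then u n else φ k n) = u n
  split_ifs with hn
  · rfl
  · exact (hk n (not_lt.mp hn)).symm

section
variable {α : Type*} {b t r ℓ : ℕ} {lam : ℕ → α} {Φ : ℕ → ZMod b → α → α}

theorem exists_kernel_step (hb : 2 ≤ b) (hr : r = b ^ t) (ht : 1 ≤ t)
    (hrec : ∀ m k, 1 ≤ k → k ≤ r → lam (ℓ + r * m + k) = Φ k m (lam (m + 1)))
    {i : ℕ} (hi : i ≠ 0) {j : ℤ} (hj₀ : -(ℓ + 1 : ℤ) ≤ j) (hj₁ : j ≤ b ^ (i + t) + ℓ + 1) :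
    ∃ k p, ∃ j' : ℤ, -(ℓ + 1 : ℤ) ≤ j' ∧ j' ≤ b ^ i + ℓ + 1 ∧ ∀ n : ℕ, ℓ + 1 ≤ n →
      lam (b ^ (i + t) * n + j).toNat = Φ k p (lam (b ^ i * n + j').toNat) := by
  have hr2 : (2 : ℤ) ≤ r := by
    subst hr; exact_mod_cast hb.trans (Nat.le_self_pow (by omega) b)
  set e := j - ℓ - 1
  set d := e / r
  set c := e % r
  have hdc : r * d + c = j - ℓ - 1 := Int.mul_ediv_add_emod e r
  have hc₀ : 0 ≤ c := Int.emod_nonneg e (by omega)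
  have hcr : c < r := Int.emod_lt_of_pos e (by omega)
  have hbi : (b : ℤ) ^ (i + t) = r * b ^ i := by rw [hr, pow_add]; push_cast; ring
  have hd₀ : -(ℓ + 1 : ℤ) ≤ d := by nlinarith
  have hd₁ : d ≤ b ^ i := by nlinarith
  refine ⟨c.toNat + 1, d, d + 1, by omega, by omega, fun n hn => ?_⟩
  have hn' : (ℓ + 1 : ℤ) ≤ b ^ i * n := by
    have : (1 : ℤ) ≤ b ^ i := one_le_pow₀ (by omega)
    nlinarith
  obtain ⟨m, hm⟩ : ∃ m : ℕ, (m : ℤ) = b ^ i * n + d := ⟨_, Int.toNat_of_nonneg (by omega)⟩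
  have hidx : b ^ (i + t) * n + j = ((ℓ + r * m + (c.toNat + 1) : ℕ) : ℤ) := by
    push_cast; rw [hm, Int.toNat_of_nonneg hc₀, hbi]; linear_combination -hdc
  have hsucc : b ^ i * n + (d + 1) = ((m + 1 : ℕ) : ℤ) := by push_cast; rw [hm]; ring
  have hpar : (m : ZMod b) = d := by
    have : ((m : ℤ) : ZMod b) = d := by
      rw [hm]; push_cast; rw [ZMod.natCast_self, zero_pow hi, zero_mul, zero_add]
    exact_mod_cast this
  rw [hidx, hsucc, Int.toNat_natCast, Int.toNat_natCast, hrec m _ (by omega) (by omega), hpar]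

/-- Offsets `j` may be negative; the indices are nonnegative for `n ≥ ℓ + 1`. -/
theorem exists_kernel_tail_eq (hb : 2 ≤ b) (hr : r = b ^ t) (ht : 1 ≤ t)
    (hrec : ∀ m k, 1 ≤ k → k ≤ r → lam (ℓ + r * m + k) = Φ k m (lam (m + 1)))
    (i : ℕ) {j : ℤ} (hj₀ : -(ℓ + 1 : ℤ) ≤ j) (hj₁ : j ≤ b ^ i + ℓ + 1) :
    ∃ G : α → α, ∃ i₀ ≤ t, ∃ j₀ : ℤ, -(ℓ + 1 : ℤ) ≤ j₀ ∧ j₀ ≤ b ^ t + ℓ + 1 ∧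
      ∀ n : ℕ, ℓ + 1 ≤ n → lam (b ^ i * n + j).toNat = G (lam (b ^ i₀ * n + j₀).toNat) := by
  induction i using Nat.strong_induction_on generalizing j with
  | _ i ih =>
    by_cases hit : i ≤ t
    · have : (b : ℤ) ^ i ≤ b ^ t := pow_le_pow_right₀ (by exact_mod_cast (by omega : 1 ≤ b)) hit
      exact ⟨id, i, hit, j, hj₀, by omega, fun _ _ => rfl⟩
    obtain ⟨i, rfl⟩ : ∃ i', i = i' + t := ⟨i - t, by omega⟩
    obtain ⟨k, p, j', hj'₀, hj'₁, hstep⟩ :=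
      exists_kernel_step hb hr ht hrec (i := i) (by omega) hj₀ hj₁
    obtain ⟨G, i₀, hi₀, j₀, hj₀₀, hj₀₁, hG⟩ := ih i (by omega) hj'₀ hj'₁
    exact ⟨Φ k p ∘ G, i₀, hi₀, j₀, hj₀₀, hj₀₁, fun n hn => by rw [hstep n hn, hG n hn]; rfl⟩

theorem seqKernel_finite [Finite α] (hb : 2 ≤ b) (hr : r = b ^ t) (ht : 1 ≤ t)
    (hrec : ∀ m k, 1 ≤ k → k ≤ r → lam (ℓ + r * m + k) = Φ k m (lam (m + 1))) :
    (seqKernel b lam).Finite := by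
  refine Set.Finite.of_forall_exists_tail_eq (ℓ + 1)
    (fun (p : (α → α) × Fin (t + 1) × Set.Icc (-(ℓ + 1 : ℤ)) (b ^ t + ℓ + 1)) n =>
      p.1 (lam (b ^ (p.2.1 : ℕ) * n + (p.2.2 : ℤ)).toNat)) ?_
  rintro _ ⟨i, j, hj, rfl⟩
  have hj' : (j : ℤ) ≤ b ^ i + ℓ + 1 := by
    have : (j : ℤ) < b ^ i := by exact_mod_cast hj
    omega
  obtain ⟨G, i₀, hi₀, j₀, hj₀₀, hj₀₁, hG⟩ := exists_kernel_tail_eq hb hr ht hrec i (by omega) hj'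
  refine ⟨(G, ⟨i₀, by omega⟩, ⟨j₀, hj₀₀, hj₀₁⟩), fun n hn => ?_⟩
  refine (congrArg lam ?_).trans (hG n hn)
  exact_mod_cast (Int.toNat_natCast _).symm

end

theorem char_two_recurrence_automatic_general {F : Type*} [Field F] [Fintype F]
    (t : ℕ) (ht : 1 ≤ t)
    (r : ℕ) (hr : r = 2 ^ t)
    (ℓ : ℕ)
    (lam : ℕ → F) (ε₁ ε₂ : F)
    (hrec1 : ∀ m : ℕ,
      lam (ℓ + r * m + 1) = (ε₂ / ε₁) * ε₂ ^ ((-1 : ℤ) ^ (m + 1)) * (lam (m + 1)) ^ r)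
    (hrec2 : ∀ m i : ℕ, 2 ≤ i → i ≤ r →
      lam (ℓ + r * m + i) = (ε₁ / ε₂) ^ ((-1 : ℤ) ^ i)) :
    Set.Finite {u : ℕ → F | ∃ i j : ℕ, j < 2 ^ i ∧ u = fun n => lam (2 ^ i * n + j)} := by
  refine seqKernel_finite (ℓ := ℓ) (Φ := fun k (p : ZMod 2) x =>
    if k = 1 then (ε₂ / ε₁) * ε₂ ^ ((-1 : ℤ) ^ (p.val + 1)) * x ^ r
    else (ε₁ / ε₂) ^ ((-1 : ℤ) ^ k)) le_rfl hr ht fun m k hk₁ hkr => ?_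
  rcases hk₁.eq_or_lt with rfl | hk₂
  · rw [hrec1, if_pos rfl, ZMod.val_natCast, neg_one_pow_eq_pow_mod_two,
      neg_one_pow_eq_pow_mod_two (m % 2 + 1), Nat.mod_add_mod]
  · rw [hrec2 m k hk₂ hkr, if_neg hk₂.ne']

/-- Theorem (automaticity of the sequences of Proposition 1). Let `q = 2^s`, `r = 2^t`
with `s, t ≥ 1`, `ℓ ≥ 1`, and `λ_1, …, λ_ℓ, ε_1, ε_2 ∈ F_q^*`. Define `(λ_n)_{n ≥ 1}` by
recursion (1): for all `m ≥ 0`, `λ_{ℓ+rm+1} = (ε_2/ε_1) ε_2^((-1)^(m+1)) (λ_{m+1})^r`, and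
`λ_{ℓ+rm+i} = (ε_1/ε_2)^((-1)^i)` for `2 ≤ i ≤ r`. Then `(λ_n)_{n ≥ 1}` is `2`-automatic,
i.e. its `2`-kernel is a finite set of sequences. -/
theorem char_two_recurrence_automatic {F : Type*} [Field F] [Fintype F]
    (s t : ℕ) (hs : 1 ≤ s) (ht : 1 ≤ t) (hcard : Fintype.card F = 2 ^ s)
    (r : ℕ) (hr : r = 2 ^ t)
    (ℓ : ℕ) (hℓ : 1 ≤ ℓ)
    (lam : ℕ → F) (ε₁ ε₂ : F) (hε₁ : ε₁ ≠ 0) (hε₂ : ε₂ ≠ 0)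
    (hlam : ∀ n, 1 ≤ n → lam n ≠ 0)
    (hrec1 : ∀ m : ℕ,
      lam (ℓ + r * m + 1) = (ε₂ / ε₁) * ε₂ ^ ((-1 : ℤ) ^ (m + 1)) * (lam (m + 1)) ^ r)
    (hrec2 : ∀ m i : ℕ, 2 ≤ i → i ≤ r →
      lam (ℓ + r * m + i) = (ε₁ / ε₂) ^ ((-1 : ℤ) ^ i)) :
    Set.Finite {u : ℕ → F | ∃ i j : ℕ, j < 2 ^ i ∧ u = fun n => lam (2 ^ i * n + j)} :=
  char_two_recurrence_automatic_general t ht r hr ℓ lam ε₁ ε₂ hrec1 hrec2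
end

section
/- Let (λ_n)_{n≥1} be the sequence in F_q^* defined by recursion (1) with r = 2, and let f = ∑_{n≥1} λ_n X^n ∈ F_q[[X]]. Then f belongs to the field of rational functions F_q(X) (i.e., f is the power series expansion of a rational function) if and only if λ_m = (ε_1/ε_2) · ε_2^{((−1)^ℓ − (−1)^m)/2} for all 1 ≤ m ≤ ℓ. -/
/-!
Dividing `λ` by the 2-periodic sequence `c` on the right-hand side of the criterion turns
recursion (1) into `μ (ℓ + 2m + 1) = μ (m + 1) ^ 2`, `μ (ℓ + 2m + 2) = 1` for `μ = λ / c`, and the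
criterion into `μ = 1` on `[1, ℓ]`. If that holds, `μ = 1` everywhere, so `λ = c` is 2-periodic
and `f` is rational. Conversely, over a finite field the denominator of a rational `f` divides
some `X ^ N * (X ^ T - 1)`, so the coefficients of `f` are eventually periodic. Squaring is
injective in characteristic 2, so a period `2T` of `μ` from `N` on gives a period `T` from about
`N / 2` on; this pushes the periodicity down to index 1 and then down to an odd period, and an
odd period moves every index onto one of the positions `ℓ + 2m + 2`, where `μ = 1`.
-/

def PeriodicFrom {α : Type*} (g : ℕ → α) (N T : ℕ) : Prop :=
  ∀ n, N ≤ n → g (n + T) = g n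

namespace PeriodicFrom

variable {α : Type*} {g : ℕ → α} {N T : ℕ}

theorem mono (h : PeriodicFrom g N T) {N' : ℕ} (hN : N ≤ N') : PeriodicFrom g N' T :=
  fun n hn => h n (hN.trans hn)

theorem mul_right (h : PeriodicFrom g N T) (k : ℕ) : PeriodicFrom g N (T * k) := by
  intro n hn
  induction k with
  | zero => simp
  | succ k ih => rw [mul_add_one, ← add_assoc, h _ (by omega), ih]

theorem div [Div α] {g' : ℕ → α} (h : PeriodicFrom g N T) (h' : PeriodicFrom g' N T) :
    PeriodicFrom (g / g') N T :=
  fun n hn => by simp only [Pi.div_apply, h n hn, h' n hn]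

end PeriodicFrom

section

open Polynomial

theorem PowerSeries.exists_polynomial_mul_eq_of_periodicFrom {R : Type*} [CommRing R] [Nontrivial R]
    {g : ℕ → R} {N T : ℕ} (hT : 0 < T) (hg : PeriodicFrom g N T) :
    ∃ P Q : R[X], Q ≠ 0 ∧ (Q : PowerSeries R) * mk g = P := by
  let Q : R[X] := Polynomial.X ^ T - Polynomial.C 1
  refine ⟨trunc (N + T) ((Q : PowerSeries R) * mk g), Q, X_pow_sub_C_ne_zero hT 1, ?_⟩
  ext n
  rw [Polynomial.coeff_coe, coeff_trunc]
  split_ifs with hn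
  · rfl
  · have hQ : (Q : PowerSeries R) = X ^ T - 1 := by simp [Q]
    obtain ⟨k, rfl⟩ : ∃ k, n = k + T := ⟨n - T, by omega⟩
    rw [hQ, sub_mul, one_mul, map_sub, coeff_X_pow_mul, coeff_mk, coeff_mk, hg k (by omega),
      sub_self]

theorem Polynomial.exists_dvd_X_pow_mul_X_pow_sub_one {F : Type*} [Field F] [Finite F] {Q : F[X]}
    (hQ : Q ≠ 0) : ∃ N T : ℕ, 0 < T ∧ Q ∣ X ^ N * (X ^ T - 1) := by
  have := (AdjoinRoot.powerBasis hQ).finite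
  have := Module.finite_of_finite F (M := AdjoinRoot Q)
  obtain ⟨a, b, hab, h⟩ := Finite.exists_ne_map_eq_of_infinite (AdjoinRoot.root Q ^ · : ℕ → _)
  wlog hlt : a < b generalizing a b
  · exact this b a hab.symm h.symm (by omega)
  refine ⟨a, b - a, by omega, ?_⟩
  rw [mul_sub, ← pow_add, mul_one, Nat.add_sub_cancel' hlt.le, ← AdjoinRoot.mk_eq_mk]
  simpa [AdjoinRoot.mk_X] using h.symm

theorem PowerSeries.exists_periodicFrom_coeff {F : Type*} [Field F] [Finite F] {f : PowerSeries F}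
    {P Q : F[X]} (hQ : Q ≠ 0) (h : (Q : PowerSeries F) * f = P) :
    ∃ N T : ℕ, 0 < T ∧ PeriodicFrom (coeff · f) N T := by
  obtain ⟨N, T, hT, R, hR⟩ := exists_dvd_X_pow_mul_X_pow_sub_one hQ
  have hpoly : (X ^ N * (X ^ T - 1) : PowerSeries F) * f = ↑(R * P) := by
    rw [Polynomial.coe_mul, ← h, ← mul_assoc, mul_comm (R : PowerSeries F), ← Polynomial.coe_mul,
      ← hR]
    simp
  refine ⟨(R * P).natDegree + 1, T, hT, fun n hn => ?_⟩
  have := congrArg (coeff (n + T + N)) hpoly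
  rw [Polynomial.coeff_coe, Polynomial.coeff_eq_zero_of_natDegree_lt (by omega), mul_sub, mul_one,
    ← pow_add, sub_mul, map_sub, coeff_X_pow_mul, show n + T + N = n + (N + T) by ring,
    coeff_X_pow_mul, sub_eq_zero] at this
  exact this.symm

end

structure NormalizedRecurrence {R : Type*} [Monoid R] (ℓ : ℕ) (μ : ℕ → R) : Prop where
  add_two_mul_add_one : ∀ m, μ (ℓ + 2 * m + 1) = μ (m + 1) ^ 2
  add_two_mul_add_two : ∀ m, μ (ℓ + 2 * m + 2) = 1

namespace NormalizedRecurrence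

variable {R : Type*} {ℓ : ℕ} {μ : ℕ → R}

theorem eq_one_of_forall_le [Monoid R] (hμ : NormalizedRecurrence ℓ μ) (hℓ : 1 ≤ ℓ)
    (h : ∀ m, 1 ≤ m → m ≤ ℓ → μ m = 1) : ∀ n, 1 ≤ n → μ n = 1 := by
  intro n
  induction n using Nat.strong_induction_on with
  | _ n ih =>
    intro hn
    rcases le_or_gt n ℓ with hnℓ | hnℓ
    · exact h n hn hnℓ
    obtain ⟨m, rfl | rfl⟩ : ∃ m, n = ℓ + 2 * m + 1 ∨ n = ℓ + 2 * m + 2 :=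
      ⟨(n - ℓ - 1) / 2, by omega⟩
    · rw [hμ.add_two_mul_add_one, ih (m + 1) (by omega) (by omega), one_pow]
    · exact hμ.add_two_mul_add_two m

theorem eq_one_of_periodicFrom_odd [Monoid R] (hμ : NormalizedRecurrence ℓ μ) {u : ℕ}
    (hu : Odd u) (hper : PeriodicFrom μ 1 u) {n : ℕ} (hn : 1 ≤ n) : μ n = 1 := by
  obtain ⟨a, rfl⟩ := hu
  -- an odd period can shift `n` to an index of the parity of `ℓ` beyond `ℓ`
  have hshift : (2 * a + 1) * (n + ℓ + 2) = 2 * (a * (n + ℓ + 2)) + (n + ℓ + 2) := by ring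
  obtain ⟨m, hm⟩ : ∃ m, n + (2 * a + 1) * (n + ℓ + 2) = ℓ + 2 * m + 2 :=
    ⟨(n + (2 * a + 1) * (n + ℓ + 2) - ℓ - 2) / 2, by omega⟩
  rw [← hper.mul_right _ n hn, hm, hμ.add_two_mul_add_two]

variable [CommRing R] [IsReduced R] [CharP R 2]

theorem periodicFrom_of_two_mul (hμ : NormalizedRecurrence ℓ μ) (hℓ : 1 ≤ ℓ) {N T : ℕ}
    (h : PeriodicFrom μ N (2 * T)) : PeriodicFrom μ (max 1 ((N + 1) / 2)) T := by
  intro n hn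
  obtain ⟨m, rfl⟩ : ∃ m, n = m + 1 := ⟨n - 1, by omega⟩
  apply frobenius_inj R 2
  simp only [frobenius_def]
  calc μ (m + 1 + T) ^ 2 = μ (ℓ + 2 * m + 1 + 2 * T) := by
        rw [add_right_comm, ← hμ.add_two_mul_add_one]; ring_nf
    _ = μ (ℓ + 2 * m + 1) := h _ (by omega)
    _ = μ (m + 1) ^ 2 := hμ.add_two_mul_add_one m

theorem periodicFrom_one (hμ : NormalizedRecurrence ℓ μ) (hℓ : 1 ≤ ℓ) {N T : ℕ}
    (h : PeriodicFrom μ N T) : PeriodicFrom μ 1 T := by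
  induction N using Nat.strong_induction_on with
  | _ N ih =>
    rcases le_or_gt N 1 with hN | hN
    · exact h.mono hN
    · exact ih _ (by omega) (hμ.periodicFrom_of_two_mul hℓ (mul_comm T 2 ▸ h.mul_right 2))

theorem exists_odd_periodicFrom_one (hμ : NormalizedRecurrence ℓ μ) (hℓ : 1 ≤ ℓ) {T : ℕ}
    (hT : 0 < T) (h : PeriodicFrom μ 1 T) : ∃ u, Odd u ∧ PeriodicFrom μ 1 u := by
  obtain ⟨k, u, hu, rfl⟩ := Nat.exists_eq_two_pow_mul_odd hT.ne'
  refine ⟨u, hu, ?_⟩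
  clear hT
  induction k with
  | zero => simpa using h
  | succ k ih =>
    rw [pow_succ', mul_assoc] at h
    simpa using ih (hμ.periodicFrom_of_two_mul hℓ h)

theorem eq_one_of_periodicFrom (hμ : NormalizedRecurrence ℓ μ) (hℓ : 1 ≤ ℓ) {N T : ℕ}
    (hT : 0 < T) (h : PeriodicFrom μ N T) {n : ℕ} (hn : 1 ≤ n) : μ n = 1 := by
  obtain ⟨u, hu, hper⟩ := hμ.exists_odd_periodicFrom_one hℓ hT (hμ.periodicFrom_one hℓ h)
  exact hμ.eq_one_of_periodicFrom_odd hu hper hn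

end NormalizedRecurrence

section

variable {K : Type*} [Field K] (ℓ : ℕ) (ε₁ ε₂ : K)

def periodicSolution (n : ℕ) : K :=
  ε₁ / ε₂ * ε₂ ^ (((-1 : ℤ) ^ ℓ - (-1 : ℤ) ^ n) / 2)

variable {ℓ ε₁ ε₂}

theorem periodicSolution_ne_zero (hε₁ : ε₁ ≠ 0) (hε₂ : ε₂ ≠ 0) (n : ℕ) :
    periodicSolution ℓ ε₁ ε₂ n ≠ 0 :=
  mul_ne_zero (div_ne_zero hε₁ hε₂) (zpow_ne_zero _ hε₂)

theorem periodicFrom_periodicSolution (N : ℕ) : PeriodicFrom (periodicSolution ℓ ε₁ ε₂) N 2 :=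
  fun n _ => by simp [periodicSolution, pow_add]

theorem periodicSolution_add_two_mul_add_two (m : ℕ) :
    periodicSolution ℓ ε₁ ε₂ (ℓ + 2 * m + 2) = ε₁ / ε₂ := by
  simp [periodicSolution, pow_add, pow_mul]

theorem periodicSolution_add_two_mul_add_one (hε₁ : ε₁ ≠ 0) (hε₂ : ε₂ ≠ 0) (m : ℕ) :
    periodicSolution ℓ ε₁ ε₂ (ℓ + 2 * m + 1) =
      ε₂ / ε₁ * ε₂ ^ ((-1 : ℤ) ^ (m + 1)) * periodicSolution ℓ ε₁ ε₂ (m + 1) ^ 2 := by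
  -- `((-1)^ℓ - (-1)^(m+1)) / 2` is an exact division, so squaring doubles it back
  set a := (-1 : ℤ) ^ ℓ
  set b := (-1 : ℤ) ^ (m + 1)
  have h2e : (a - b) / 2 * 2 = a - b := by
    apply Int.ediv_mul_cancel
    rcases neg_one_pow_eq_or ℤ ℓ with h | h <;> rcases neg_one_pow_eq_or ℤ (m + 1) with h' | h' <;>
      simp [a, b, h, h']
  have hodd : (a - (-1 : ℤ) ^ (ℓ + 2 * m + 1)) / 2 = a := by
    rw [show (-1 : ℤ) ^ (ℓ + 2 * m + 1) = -a by simp [a, pow_add, pow_mul]]; omega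
  symm
  calc ε₂ / ε₁ * ε₂ ^ b * (ε₁ / ε₂ * ε₂ ^ ((a - b) / 2)) ^ 2
      = ε₂ / ε₁ * (ε₁ / ε₂) ^ 2 * (ε₂ ^ b * ε₂ ^ ((a - b) / 2 * 2)) := by
        rw [mul_pow, ← zpow_natCast (ε₂ ^ _), ← zpow_mul, Nat.cast_ofNat]; ring
    _ = periodicSolution ℓ ε₁ ε₂ (ℓ + 2 * m + 1) := by
        rw [← zpow_add₀ hε₂, h2e, add_sub_cancel, periodicSolution, hodd]
        field_simp

theorem normalizedRecurrence_div_periodicSolution (hε₁ : ε₁ ≠ 0) (hε₂ : ε₂ ≠ 0) {lam : ℕ → K}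
    (h₁ : ∀ m, lam (ℓ + 2 * m + 1) = ε₂ / ε₁ * ε₂ ^ ((-1 : ℤ) ^ (m + 1)) * lam (m + 1) ^ 2)
    (h₂ : ∀ m, lam (ℓ + 2 * m + 2) = ε₁ / ε₂) :
    NormalizedRecurrence ℓ (lam / periodicSolution ℓ ε₁ ε₂) where
  add_two_mul_add_one m := by
    have hK : ε₂ / ε₁ * ε₂ ^ ((-1 : ℤ) ^ (m + 1)) ≠ 0 :=
      mul_ne_zero (div_ne_zero hε₂ hε₁) (zpow_ne_zero _ hε₂)
    rw [Pi.div_apply, Pi.div_apply, h₁, periodicSolution_add_two_mul_add_one hε₁ hε₂, div_pow,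
      mul_div_mul_left _ _ hK]
  add_two_mul_add_two m := by
    rw [Pi.div_apply, h₂, periodicSolution_add_two_mul_add_two, div_self (div_ne_zero hε₁ hε₂)]

end

theorem char_two_recurrence_rationality_general {F : Type*} [Field F] [Fintype F]
    (s : ℕ) (hcard : Fintype.card F = 2 ^ s)
    (r : ℕ) (hr : r = 2)
    (ℓ : ℕ) (hℓ : 1 ≤ ℓ)
    (lam : ℕ → F) (ε₁ ε₂ : F) (hε₁ : ε₁ ≠ 0) (hε₂ : ε₂ ≠ 0)
    (hrec1 : ∀ m : ℕ,
      lam (ℓ + r * m + 1) = (ε₂ / ε₁) * ε₂ ^ ((-1 : ℤ) ^ (m + 1)) * (lam (m + 1)) ^ r)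
    (hrec2 : ∀ m i : ℕ, 2 ≤ i → i ≤ r →
      lam (ℓ + r * m + i) = (ε₁ / ε₂) ^ ((-1 : ℤ) ^ i))
    (f : PowerSeries F)
    (hf : f = PowerSeries.mk fun n => if n = 0 then 0 else lam n) :
    (∃ P Q : Polynomial F, Q ≠ 0 ∧ (Q : PowerSeries F) * f = (P : PowerSeries F)) ↔
      (∀ m, 1 ≤ m → m ≤ ℓ →
        lam m = (ε₁ / ε₂) * ε₂ ^ (((-1 : ℤ) ^ ℓ - (-1 : ℤ) ^ m) / 2)) := by
  subst hr
  have : CharP F 2 := charP_of_card_eq_prime_pow hcard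
  set c := periodicSolution ℓ ε₁ ε₂
  have hc : ∀ n, c n ≠ 0 := periodicSolution_ne_zero hε₁ hε₂
  have hμ : NormalizedRecurrence ℓ (lam / c) :=
    normalizedRecurrence_div_periodicSolution hε₁ hε₂ hrec1
      fun m => by simpa using hrec2 m 2 le_rfl le_rfl
  change _ ↔ ∀ m, 1 ≤ m → m ≤ ℓ → lam m = c m
  simp_rw [← div_eq_one_iff_eq (hc _)]
  constructor
  · rintro ⟨P, Q, hQ, h⟩ m hm -
    obtain ⟨N, T, hT, hper⟩ := PowerSeries.exists_periodicFrom_coeff hQ h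
    have hlam : PeriodicFrom lam (N + 1) T := fun n hn => by
      simpa [hf, show n ≠ 0 by omega] using hper n (by omega)
    have hlam2 : PeriodicFrom lam (N + 1) (2 * T) := mul_comm T 2 ▸ hlam.mul_right 2
    exact hμ.eq_one_of_periodicFrom hℓ (by omega)
      (hlam2.div ((periodicFrom_periodicSolution _).mul_right T)) hm
  · intro h
    have hlam : ∀ n, 1 ≤ n → lam n = c n := fun n hn =>
      (div_eq_one_iff_eq (hc n)).mp (hμ.eq_one_of_forall_le hℓ h n hn)
    refine hf ▸ PowerSeries.exists_polynomial_mul_eq_of_periodicFrom two_pos (N := 1) fun n hn => ?_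
    rw [if_neg (by omega), if_neg (by omega), hlam n hn, hlam (n + 2) (by omega)]
    exact periodicFrom_periodicSolution n n le_rfl

/-- Rationality criterion for the generating function (remark after Proposition 3, in the
variable `X = 1/T`). Let `(λ_n)_{n ≥ 1}` in `F_q^*` (with `q = 2^s`) be defined by
recursion (1) with `r = 2`, and let `f = ∑_{n ≥ 1} λ_n X^n ∈ F_q[[X]]`. Then `f` is the
power series expansion of a rational function (i.e. `Q f = P` for some polynomials `P, Q`
with `Q ≠ 0`) if and only if `λ_m = (ε_1/ε_2) ε_2^(((-1)^ℓ - (-1)^m)/2)` for all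
`1 ≤ m ≤ ℓ`. -/
theorem char_two_recurrence_rationality {F : Type*} [Field F] [Fintype F]
    (s : ℕ) (hs : 1 ≤ s) (hcard : Fintype.card F = 2 ^ s)
    (r : ℕ) (hr : r = 2)
    (ℓ : ℕ) (hℓ : 1 ≤ ℓ)
    (lam : ℕ → F) (ε₁ ε₂ : F) (hε₁ : ε₁ ≠ 0) (hε₂ : ε₂ ≠ 0)
    (hlam : ∀ n, 1 ≤ n → lam n ≠ 0)
    (hrec1 : ∀ m : ℕ,
      lam (ℓ + r * m + 1) = (ε₂ / ε₁) * ε₂ ^ ((-1 : ℤ) ^ (m + 1)) * (lam (m + 1)) ^ r)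
    (hrec2 : ∀ m i : ℕ, 2 ≤ i → i ≤ r →
      lam (ℓ + r * m + i) = (ε₁ / ε₂) ^ ((-1 : ℤ) ^ i))
    (f : PowerSeries F)
    (hf : f = PowerSeries.mk fun n => if n = 0 then 0 else lam n) :
    (∃ P Q : Polynomial F, Q ≠ 0 ∧ (Q : PowerSeries F) * f = (P : PowerSeries F)) ↔
      (∀ m, 1 ≤ m → m ≤ ℓ →
        lam m = (ε₁ / ε₂) * ε₂ ^ (((-1 : ℤ) ^ ℓ - (-1 : ℤ) ^ m) / 2)) :=
  char_two_recurrence_rationality_general s hcard r hr ℓ hℓ lam ε₁ ε₂ hε₁ hε₂ hrec1 hrec2 f hf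
end

section
/- Let q = 2^s with s ≥ 1 an integer, and let U ∈ F_q[X] be a nonzero polynomial with zero constant term, of order a ≥ 1 (the smallest exponent with nonzero coefficient) and degree b, satisfying b < 2a. Then the power series σ = ∑_{m≥0} U^{2^m} ∈ F_q[[X]] is irrational: there are no polynomials P, Q ∈ F_q[X] with Q ≠ 0 and Q·σ = P. -/
/-!
Since `deg U < 2 ord U`, the supports `[2^m ord U, 2^m deg U]` of the powers `U^(2^m)` are
separated by gaps of length `2^m (2 ord U - deg U)`, so `σ` has arbitrarily long runs of zero
coefficients, each followed by the nonzero coefficient `(trailingCoeff U)^(2^m)`. A rational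
series `P / Q` cannot have this shape: if a gap longer than `deg Q` ends at a nonzero coefficient
`σ_n` with `n > deg P`, then the only contribution to the coefficient of `X^(n + ord Q)` in
`Q σ` is `(trailingCoeff Q) σ_n ≠ 0`, while `P` has no such coefficient.
-/

open Polynomial Finset
open PowerSeries (coeff coeff_mul coeff_mk)
open scoped PowerSeries

namespace Polynomial

variable {R : Type*} [Semiring R] [NoZeroDivisors R]

theorem natTrailingDegree_pow (p : R[X]) (n : ℕ) :
    (p ^ n).natTrailingDegree = n * p.natTrailingDegree := by
  rcases eq_or_ne p 0 with rfl | hp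
  · rcases n with _ | n <;> simp
  induction n with
  | zero => simp
  | succ n ih => rw [pow_succ, natTrailingDegree_mul (pow_ne_zero _ hp) hp, ih, Nat.succ_mul]

theorem trailingCoeff_pow (p : R[X]) (n : ℕ) : (p ^ n).trailingCoeff = p.trailingCoeff ^ n := by
  induction n with
  | zero => simp [trailingCoeff]
  | succ n ih => rw [pow_succ, trailingCoeff_mul, ih, pow_succ]

theorem coeff_pow_eq_zero_of_lt_or_lt {p : R[X]} {n k : ℕ}
    (hk : k < n * p.natTrailingDegree ∨ n * p.natDegree < k) : (p ^ n).coeff k = 0 := by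
  rcases hk with hk | hk
  · exact coeff_eq_zero_of_lt_natTrailingDegree (by rwa [natTrailingDegree_pow])
  · exact coeff_eq_zero_of_natDegree_lt (natDegree_pow_le.trans_lt hk)

end Polynomial

namespace PowerSeries

variable {R : Type*} [Semiring R]

def HasArbitrarilyLongGaps (f : R⟦X⟧) : Prop :=
  ∀ N, ∃ n ≥ N, coeff n f ≠ 0 ∧ ∀ k, n - N ≤ k → k < n → coeff k f = 0

theorem HasArbitrarilyLongGaps.coe_mul_ne_coe [NoZeroDivisors R] {f : R⟦X⟧}
    (hf : f.HasArbitrarilyLongGaps) {Q : R[X]} (hQ : Q ≠ 0) (P : R[X]) :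
    (Q : R⟦X⟧) * f ≠ P := by
  intro h
  set t := Q.natTrailingDegree
  obtain ⟨n, hn, hfn, hgap⟩ := hf (Q.natDegree + P.natDegree + 1)
  have hcoeff : coeff (n + t) ((Q : R⟦X⟧) * f) = Q.trailingCoeff * coeff n f := by
    rw [coeff_mul,
      sum_eq_single_of_mem (t, n) (HasAntidiagonal.mem_antidiagonal.2 (add_comm _ _))]
    · exact congrArg (· * _) (Polynomial.coeff_coe _ _)
    rintro ⟨j, k⟩ hjk hne
    rw [HasAntidiagonal.mem_antidiagonal] at hjk
    rw [Polynomial.coeff_coe]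
    rcases lt_or_ge j t with hjt | hjt
    · rw [coeff_eq_zero_of_lt_natTrailingDegree hjt, zero_mul]
    rcases lt_or_ge Q.natDegree j with hjd | hjd
    · rw [coeff_eq_zero_of_natDegree_lt hjd, zero_mul]
    have hjt' : t < j := hjt.lt_of_ne fun hj => hne (by ext <;> simp <;> omega)
    rw [hgap k (by omega) (by omega), mul_zero]
  rw [h, Polynomial.coeff_coe, coeff_eq_zero_of_natDegree_lt (by omega)] at hcoeff
  exact mul_ne_zero (trailingCoeff_nonzero_iff_nonzero.2 hQ) hfn hcoeff.symm

end PowerSeries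

section SumTwoPowPowers

variable {R : Type*} [Semiring R] [NoZeroDivisors R]

/-- The series `∑_{m ≥ 0} U^(2^m)`, truncated to `m ≤ n` in the `n`-th coefficient; this loses
nothing when `U(0) = 0`, as `U^(2^m)` then has order at least `2^m > n` for `m > n`. -/
noncomputable def sumTwoPowPowers (U : R[X]) : R⟦X⟧ :=
  PowerSeries.mk fun n => ∑ m ∈ range (n + 1), (U ^ 2 ^ m).coeff n

variable {U : R[X]}

theorem coeff_sumTwoPowPowers_eq_zero {m k : ℕ} (h₁ : 2 ^ m * U.natDegree < k)
    (h₂ : k < 2 ^ (m + 1) * U.natTrailingDegree) : coeff k (sumTwoPowPowers U) = 0 := by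
  rw [sumTwoPowPowers, coeff_mk]
  refine sum_eq_zero fun j _ => coeff_pow_eq_zero_of_lt_or_lt ?_
  rcases le_or_gt j m with hj | hj
  · exact .inr ((Nat.mul_le_mul_right _ (Nat.pow_le_pow_right two_pos hj)).trans_lt h₁)
  · exact .inl (h₂.trans_le (Nat.mul_le_mul_right _ (Nat.pow_le_pow_right two_pos hj)))

variable (hdeg : U.natDegree < 2 * U.natTrailingDegree)
include hdeg

theorem coeff_two_pow_mul_natTrailingDegree_sumTwoPowPowers (m : ℕ) :
    coeff (2 ^ m * U.natTrailingDegree) (sumTwoPowPowers U) = U.trailingCoeff ^ 2 ^ m := by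
  have ht : 0 < U.natTrailingDegree := by omega
  rw [sumTwoPowPowers, coeff_mk, sum_eq_single_of_mem m]
  · rw [← natTrailingDegree_pow, ← trailingCoeff_pow, trailingCoeff]
  · exact mem_range.2 (Nat.lt_succ_of_le
      ((Nat.lt_two_pow_self).le.trans (Nat.le_mul_of_pos_right _ ht)))
  · intro j _ hj
    apply coeff_pow_eq_zero_of_lt_or_lt
    rcases hj.lt_or_gt with hj | hj
    · right
      calc 2 ^ j * U.natDegree < 2 ^ j * (2 * U.natTrailingDegree) :=
            Nat.mul_lt_mul_of_pos_left hdeg (by positivity)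
        _ = 2 ^ (j + 1) * U.natTrailingDegree := by ring
        _ ≤ 2 ^ m * U.natTrailingDegree :=
            Nat.mul_le_mul_right _ (Nat.pow_le_pow_right two_pos hj)
    · exact .inl (Nat.mul_lt_mul_of_pos_right (Nat.pow_lt_pow_right one_lt_two hj) ht)

theorem hasArbitrarilyLongGaps_sumTwoPowPowers : (sumTwoPowPowers U).HasArbitrarilyLongGaps := by
  have hU0 : U ≠ 0 := by rintro rfl; simp at hdeg
  intro N
  have hN : N < 2 ^ N := Nat.lt_two_pow_self
  have hgap : 2 ^ N * U.natDegree + 2 ^ N ≤ 2 ^ (N + 1) * U.natTrailingDegree := by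
    calc 2 ^ N * U.natDegree + 2 ^ N = 2 ^ N * (U.natDegree + 1) := by ring
      _ ≤ 2 ^ N * (2 * U.natTrailingDegree) := Nat.mul_le_mul_left _ hdeg
      _ = 2 ^ (N + 1) * U.natTrailingDegree := by ring
  refine ⟨2 ^ (N + 1) * U.natTrailingDegree, by omega, ?_, fun k hk₁ hk₂ => ?_⟩
  · rw [coeff_two_pow_mul_natTrailingDegree_sumTwoPowPowers hdeg]
    exact pow_ne_zero _ (trailingCoeff_nonzero_iff_nonzero.2 hU0)
  · exact coeff_sumTwoPowPowers_eq_zero (m := N) (by omega) hk₂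

end SumTwoPowPowers

theorem sum_of_two_power_powers_irrational_general {F : Type*} [Field F]
    (U : Polynomial F)
    (a b : ℕ) (ha : U.natTrailingDegree = a) (hb : U.natDegree = b)
    (hab : b < 2 * a)
    (σ : PowerSeries F)
    (hσ : ∀ n : ℕ, PowerSeries.coeff n σ =
      ∑ m ∈ Finset.range (n + 1), PowerSeries.coeff n ((U : PowerSeries F) ^ 2 ^ m)) :
    ¬ ∃ P Q : Polynomial F, Q ≠ 0 ∧ (Q : PowerSeries F) * σ = (P : PowerSeries F) := by
  subst ha hb
  have hσU : σ = sumTwoPowPowers U := by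
    ext n
    simp only [hσ, sumTwoPowPowers, coeff_mk, ← Polynomial.coe_pow, Polynomial.coeff_coe]
  rintro ⟨P, Q, hQ, h⟩
  exact (hσU ▸ hasArbitrarilyLongGaps_sumTwoPowPowers hab).coe_mul_ne_coe hQ P h

/-- Irrationality of `σ = ∑_{m ≥ 0} U^(2^m)` (used in the proof of Proposition 3).
Let `q = 2^s` and let `U ∈ F_q[X]` be a nonzero polynomial with zero constant term, of
order `a ≥ 1` (smallest exponent with nonzero coefficient, i.e. trailing degree) and
degree `b`, with `b < 2a`. Then the power series `σ = ∑_{m ≥ 0} U^(2^m)` (defined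
coefficientwise) is irrational: there are no polynomials `P, Q` with `Q ≠ 0` and
`Q σ = P`. -/
theorem sum_of_two_power_powers_irrational {F : Type*} [Field F] [Fintype F]
    (s : ℕ) (hs : 1 ≤ s) (hcard : Fintype.card F = 2 ^ s)
    (U : Polynomial F) (hU : U ≠ 0) (hU0 : U.coeff 0 = 0)
    (a b : ℕ) (ha : U.natTrailingDegree = a) (hb : U.natDegree = b)
    (ha1 : 1 ≤ a) (hab : b < 2 * a)
    (σ : PowerSeries F)
    (hσ : ∀ n : ℕ, PowerSeries.coeff n σ =
      ∑ m ∈ Finset.range (n + 1), PowerSeries.coeff n ((U : PowerSeries F) ^ 2 ^ m)) :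
    ¬ ∃ P Q : Polynomial F, Q ≠ 0 ∧ (Q : PowerSeries F) * σ = (P : PowerSeries F) :=
  sum_of_two_power_powers_irrational_general U a b ha hb hab σ hσ
end

section
/- Let r ≥ 2 be an integer, let v = (v(n))_{n≥1} be a sequence with values in a finite set A, and let σ be a bijection of A. Fix an integer i with 0 ≤ i < r and an integer m ≥ 0. If (T_i v)(n + m) = σ(v(n)) for all integers n ≥ 1, and if T_j v is r-automatic for every integer j with 0 ≤ j < r and j ≠ i, then v is r-automatic. -/
/-- The `r`-kernel of a sequence `v`: the set of sequences `(v (r^i n + j))_n` for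
`i ≥ 0` and `0 ≤ j < r^i`. A sequence is `r`-automatic iff its `r`-kernel is finite. -/
def rKernel {A : Type*} (r : ℕ) (v : ℕ → A) : Set (ℕ → A) :=
  {u : ℕ → A | ∃ i j : ℕ, j < r ^ i ∧ u = fun n => v (r ^ i * n + j)}

/-!
Put `N = 2m + 2` and call `c` a window offset at level `k` if `r^k N - N < c < r^k (N + 1)`.
By induction on `k`, for every window offset `c` the sequence `n ↦ v (r^k n + c)` has the form
`g ∘ u ∘ (· + a)` with `g : A → A`, `a ≤ N`, and `u` either `v` or in the kernel of some `T_j v`,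
`j ≠ i`: writing a window offset at level `k + 1` as `c = r q + e` with `e < r`, for `e ≠ i` the
sequence is `n ↦ (T_e v) (r^k n + q)`, and for `e = i` the hypothesis turns it into
`σ ∘ (n ↦ v (r^k n + (q - m)))`, where `q - m` is a window offset at level `k` because `r ≥ 2`.
As `A` is finite there are finitely many such sequences. The `N`-fold shift of a kernel element
`n ↦ v (r^k n + j)` has the window offset `j + r^k N`, and over a finite alphabet only finitely
many sequences share an `N`-fold shift.
-/

section

variable {A : Type*}

theorem Set.Finite.setOf_shift_mem [Finite A] (N : ℕ) {F : Set (ℕ → A)} (hF : F.Finite) :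
    {u : ℕ → A | (fun n => u (n + N)) ∈ F}.Finite := by
  let restrictShift : (ℕ → A) → (Fin N → A) × (ℕ → A) :=
    fun u => (fun k => u k, fun n => u (n + N))
  have hinj : restrictShift.Injective := by
    intro u w huw
    funext n
    obtain ⟨hlow, hhigh⟩ := Prod.ext_iff.mp huw
    by_cases hn : n < N
    · exact congrFun hlow ⟨n, hn⟩
    · obtain ⟨d, rfl⟩ := Nat.exists_eq_add_of_le (not_lt.mp hn)
      simpa [restrictShift, add_comm] using congrFun hhigh d
  exact (Set.Finite.preimage (f := restrictShift) hinj.injOn (Set.finite_univ.prod hF)).subset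
    fun _ hu => ⟨trivial, hu⟩

def shiftFamily (K : Set (ℕ → A)) (N : ℕ) : Set (ℕ → A) :=
  {f | ∃ g : A → A, ∃ a ≤ N, ∃ u ∈ K, f = fun n => g (u (n + a))}

theorem Set.Finite.shiftFamily [Finite A] {K : Set (ℕ → A)} (hK : K.Finite) (N : ℕ) :
    (shiftFamily K N).Finite := by
  refine ((Set.finite_univ.prod ((Set.finite_Iic N).prod hK)).image
    fun p : (A → A) × ℕ × (ℕ → A) => fun n => p.1 (p.2.2 (n + p.2.1))).subset ?_
  rintro _ ⟨g, a, ha, u, hu, rfl⟩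
  exact ⟨(g, a, u), ⟨trivial, ha, hu⟩, rfl⟩

theorem shiftFamily_mono {K L : Set (ℕ → A)} (hKL : K ⊆ L) (N : ℕ) :
    shiftFamily K N ⊆ shiftFamily L N := by
  rintro _ ⟨g, a, ha, u, hu, rfl⟩
  exact ⟨g, a, ha, u, hKL hu, rfl⟩

theorem comp_mem_shiftFamily {K : Set (ℕ → A)} {N : ℕ} {f : ℕ → A} (hf : f ∈ shiftFamily K N)
    (g : A → A) : g ∘ f ∈ shiftFamily K N := by
  obtain ⟨g', a, ha, u, hu, rfl⟩ := hf
  exact ⟨g ∘ g', a, ha, u, hu, rfl⟩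

theorem shift_mem_shiftFamily {K : Set (ℕ → A)} {u : ℕ → A} (hu : u ∈ K) {a N : ℕ} (ha : a ≤ N) :
    (fun n => u (n + a)) ∈ shiftFamily K N :=
  ⟨id, a, ha, u, hu, rfl⟩

theorem mem_shiftFamily_rKernel (r : ℕ) (w : ℕ → A) {N k c : ℕ} (hc : c < r ^ k * (N + 1)) :
    (fun n => w (r ^ k * n + c)) ∈ shiftFamily (rKernel r w) N := by
  have hpos : 0 < r ^ k := Nat.pos_of_ne_zero fun h => by simp [h] at hc
  have hquot : c / r ^ k ≤ N := Nat.lt_succ_iff.mp ((Nat.div_lt_iff_lt_mul hpos).mpr (by linarith))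
  have hmem : (fun n => w (r ^ k * n + c % r ^ k)) ∈ rKernel r w :=
    ⟨k, c % r ^ k, Nat.mod_lt c hpos, rfl⟩
  convert shift_mem_shiftFamily hmem hquot using 2 with n
  rw [mul_add, add_assoc, Nat.div_add_mod]

end

def InWindow (N P c : ℕ) : Prop :=
  P * N < c + N ∧ c < P * (N + 1)

theorem InWindow.div_sub {r m P c : ℕ} (hr : 2 ≤ r) (hc : InWindow (2 * m + 2) (r * P) c) :
    InWindow (2 * m + 2) P (c / r - m) ∧ m < c / r := by
  obtain ⟨hlow, hhigh⟩ := hc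
  have hdiv := Nat.div_add_mod c r
  have hmod := Nat.mod_lt c (by omega : r > 0)
  -- otherwise `r (c / r + m + 2) ≤ r P (2m + 2) < c + 2m + 2 < r (c / r) + r + 2m + 2`, i.e. `r < 2`
  have hq : P * (2 * m + 2) ≤ c / r + m + 1 := by
    by_contra! h
    nlinarith
  have hP : 0 < P := Nat.pos_of_ne_zero fun h => by simp [h] at hhigh
  have hN : 2 * m + 2 ≤ P * (2 * m + 2) := Nat.le_mul_of_pos_left _ hP
  have hupper : c / r < P * (2 * m + 2) + P := Nat.div_lt_of_lt_mul (by linarith)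
  exact ⟨⟨by omega, by rw [mul_add_one]; omega⟩, by omega⟩

section

variable {A : Type*} {r i m : ℕ} {v : ℕ → A} {σ : A → A} {K : Set (ℕ → A)}

theorem mem_shiftFamily_of_inWindow (hr : 2 ≤ r)
    (h1 : ∀ n, 1 ≤ n → v (r * (n + m) + i) = σ (v n)) (hv : v ∈ K)
    (hK : ∀ j < r, j ≠ i → rKernel r (fun n => v (r * n + j)) ⊆ K) (k : ℕ) :
    ∀ c, InWindow (2 * m + 2) (r ^ k) c →
      (fun n => v (r ^ k * n + c)) ∈ shiftFamily K (2 * m + 2) := by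
  induction k with
  | zero =>
    rintro c ⟨-, hhigh⟩
    simp only [pow_zero, one_mul] at hhigh ⊢
    exact shift_mem_shiftFamily hv (by omega)
  | succ k ih =>
    intro c hc
    rw [pow_succ'] at hc
    have hsplit : ∀ n, r ^ (k + 1) * n + c = r * (r ^ k * n + c / r) + c % r := fun n => by
      rw [pow_succ]
      nth_rw 1 [← Nat.div_add_mod c r]
      ring
    simp only [hsplit]
    by_cases he : c % r = i
    · obtain ⟨hc', hm⟩ := hc.div_sub hr
      convert comp_mem_shiftFamily (ih _ hc') σ using 2 with n
      rw [he, Function.comp_apply, ← h1 _ (by omega)]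
      congr 3
      omega
    · have hhigh' : c / r < r ^ k * (2 * m + 2 + 1) :=
        Nat.div_lt_of_lt_mul (by linarith [hc.2])
      exact shiftFamily_mono (hK _ (Nat.mod_lt c (by omega)) he) _
        (mem_shiftFamily_rKernel r (fun n => v (r * n + c % r)) hhigh')

end

theorem automatic_criterion_general {A : Type*} [Finite A]
    (r : ℕ) (hr : 2 ≤ r) (v : ℕ → A) (σ : A ≃ A)
    (i : ℕ) (m : ℕ)
    (h1 : ∀ n, 1 ≤ n → v (r * (n + m) + i) = σ (v n))
    (h2 : ∀ j, j < r → j ≠ i → (rKernel r fun n => v (r * n + j)).Finite) :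
    (rKernel r v).Finite := by
  let K : Set (ℕ → A) := insert v (⋃ j ∈ {j | j < r ∧ j ≠ i}, rKernel r fun n => v (r * n + j))
  have hK : K.Finite :=
    (((Set.finite_Iio r).subset fun _ hj => hj.1).biUnion fun j hj => h2 j hj.1 hj.2).insert v
  have hkernels : ∀ j < r, j ≠ i → rKernel r (fun n => v (r * n + j)) ⊆ K := fun j hj hji =>
    fun _ hu => Set.mem_insert_of_mem v (Set.mem_biUnion (x := j) ⟨hj, hji⟩ hu)
  refine ((hK.shiftFamily (2 * m + 2)).setOf_shift_mem (2 * m + 2)).subset ?_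
  rintro _ ⟨k, j, hj, rfl⟩
  have hwindow : InWindow (2 * m + 2) (r ^ k) (j + r ^ k * (2 * m + 2)) :=
    ⟨by omega, by rw [mul_add_one]; omega⟩
  change (fun n => v (r ^ k * (n + (2 * m + 2)) + j)) ∈ shiftFamily K (2 * m + 2)
  convert mem_shiftFamily_of_inWindow hr h1 (Set.mem_insert v _) hkernels k _ hwindow using 3
  ring

/-- Theorem 3 of the paper (criterion for automatic sequences). Let `r ≥ 2`, let
`v = (v(n))_{n ≥ 1}` be a sequence with values in a finite set `A`, and let `σ` be a
bijection of `A`. Fix `0 ≤ i < r` and `m ≥ 0`. If `(T_i v)(n + m) = σ(v(n))` for all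
`n ≥ 1` (where `(T_j v)(n) = v(rn + j)`), and if `T_j v` is `r`-automatic for every
`0 ≤ j < r` with `j ≠ i`, then `v` is `r`-automatic. -/
theorem automatic_criterion {A : Type*} [Finite A]
    (r : ℕ) (hr : 2 ≤ r) (v : ℕ → A) (σ : A ≃ A)
    (i : ℕ) (hi : i < r) (m : ℕ)
    (h1 : ∀ n, 1 ≤ n → v (r * (n + m) + i) = σ (v n))
    (h2 : ∀ j, j < r → j ≠ i → (rKernel r fun n => v (r * n + j)).Finite) :
    (rKernel r v).Finite :=
  automatic_criterion_general r hr v σ i m h1 h2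
end

section
/- Let u = (u(n))_{n≥1} be the sequence in F_q defined by recursion (3), and write ℓ + 1 = ra + b with a ≥ 0 and 0 ≤ b < r integers. Then for every integer j with 0 ≤ j < r and j ≠ b, the sequence (u(rn + j))_{n≥1} is ultimately periodic; moreover, for all integers m ≥ 0 and 0 ≤ i < k, u(r(km + i + a) + b) = α_{i+1} (u(km+i+1))^γ. -/
/-!
Write `ℓ + 1 = r a + b`. The recursion fills, for each `t = k m + i`, the block of `r`
consecutive terms starting at `ℓ + 1 + r t = r (a + t) + b`: its first term is
`α_{i+1} u(t + 1)^γ`, its other `r - 1` terms are the constants `β_{t mod k, j}`. So every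
term `u(r n + j)` with `j ≠ b` lies strictly inside a block, and as a function of `n` it
depends only on `n mod k` once `n > a`; the terms `u(r n + b)` are the block heads.
-/

lemma forall_mod_of_forall_mul_add {k : ℕ} (hk : 0 < k) {P : ℕ → ℕ → Prop}
    (h : ∀ m i, i < k → P (k * m + i) i) (t : ℕ) : P t (t % k) := by
  simpa only [Nat.div_add_mod] using h (t / k) (t % k) (Nat.mod_lt t hk)

lemma periodic_tail_of_eq_mod {X : Type*} {w : ℕ → X} {g : ℕ → X} {N k : ℕ}
    (hw : ∀ t, w (N + t) = g (t % k)) {n : ℕ} (hn : N ≤ n) : w (n + k) = w n := by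
  obtain ⟨t, rfl⟩ := Nat.exists_eq_add_of_le hn
  rw [add_assoc, hw, hw, Nat.add_mod_right]

section Blocks

variable {X : Type*} {u : ℕ → X} {β : ℕ → ℕ → X} {r k a b : ℕ}

lemma exists_residue_eq_mod_of_block
    (hblock : ∀ t j, 1 ≤ j → j < r → u (r * a + b + r * t + j) = β (t % k) j)
    (hb : b < r) {j : ℕ} (hjr : j < r) (hjb : j ≠ b) :
    ∃ N, ∃ g : ℕ → X, ∀ t, u (r * (N + t) + j) = g (t % k) := by
  rcases lt_or_gt_of_ne hjb with hlt | hgt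
  · -- `u (r n + j)` with `j < b` is the entry `r + j - b` of the block started at `n - 1`
    refine ⟨a + 1, fun i => β i (r + j - b), fun t => ?_⟩
    refine (congrArg u ?_).trans (hblock t (r + j - b) (by omega) (by omega))
    rw [Nat.mul_add, Nat.mul_add]
    omega
  · refine ⟨a, fun i => β i (j - b), fun t => ?_⟩
    refine (congrArg u ?_).trans (hblock t (j - b) (by omega) (by omega))
    rw [Nat.mul_add]
    omega

end Blocks

theorem recurrence_gamma_subsequences_general {F : Type*} [Field F]
    (ℓ r k : ℕ) (hk : 1 ≤ k)
    (u : ℕ → F) (α : ℕ → F) (β : ℕ → ℕ → F) (γ : ℕ)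
    (hrec1 : ∀ m i : ℕ, i < k →
      u (ℓ + 1 + r * (k * m + i)) = α (i + 1) * (u (k * m + i + 1)) ^ γ)
    (hrec2 : ∀ m i : ℕ, i < k → ∀ j, 1 ≤ j → j < r →
      u (ℓ + 1 + r * (k * m + i) + j) = β i j)
    (a b : ℕ) (hab : ℓ + 1 = r * a + b) (hb : b < r) :
    (∀ j, j < r → j ≠ b →
      ∃ N : ℕ, 1 ≤ N ∧ ∃ d : ℕ, 1 ≤ d ∧
        ∀ n, N ≤ n → u (r * (n + d) + j) = u (r * n + j)) ∧
    (∀ m i : ℕ, i < k →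
      u (r * (k * m + i + a) + b) = α (i + 1) * (u (k * m + i + 1)) ^ γ) := by
  have hblock : ∀ t j, 1 ≤ j → j < r → u (r * a + b + r * t + j) = β (t % k) j := by
    intro t
    rw [← hab]
    exact forall_mod_of_forall_mul_add (P := fun t i => ∀ j, 1 ≤ j → j < r →
      u (ℓ + 1 + r * t + j) = β i j) hk hrec2 t
  refine ⟨fun j hjr hjb => ?_, fun m i hi => ?_⟩
  · obtain ⟨N, g, hg⟩ := exists_residue_eq_mod_of_block hblock hb hjr hjb
    refine ⟨N + 1, by omega, k, hk, fun n hn => ?_⟩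
    exact periodic_tail_of_eq_mod (w := fun n => u (r * n + j)) hg (by omega)
  · rw [← hrec1 m i hi, hab]
    ring_nf

/-- Step in the proof of Theorem 4 of the paper. Let `(u(n))_{n ≥ 1}` in `F_q` be defined
by recursion (3), and write `ℓ + 1 = ra + b` with `a ≥ 0` and `0 ≤ b < r`. Then for every
`0 ≤ j < r` with `j ≠ b`, the sequence `(u(rn + j))_{n ≥ 1}` is ultimately periodic;
moreover, for all `m ≥ 0` and `0 ≤ i < k`, `u(r(km + i + a) + b) = α_{i+1} (u(km+i+1))^γ`. -/
theorem recurrence_gamma_subsequences {F : Type*} [Field F] [Fintype F]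
    (p s : ℕ) (hp : p.Prime) (hs : 1 ≤ s) (hcard : Fintype.card F = p ^ s)
    (ℓ r k : ℕ) (hℓ : 1 ≤ ℓ) (hr : 2 ≤ r) (hk : 1 ≤ k) (hkr : k ∣ r)
    (u : ℕ → F) (α : ℕ → F) (β : ℕ → ℕ → F) (γ : ℕ)
    (hγ : 1 ≤ γ) (hγcop : Nat.Coprime γ (Fintype.card F - 1))
    (hα : ∀ i, 1 ≤ i → i ≤ k → α i ≠ 0)
    (hrec1 : ∀ m i : ℕ, i < k →
      u (ℓ + 1 + r * (k * m + i)) = α (i + 1) * (u (k * m + i + 1)) ^ γ)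
    (hrec2 : ∀ m i : ℕ, i < k → ∀ j, 1 ≤ j → j < r →
      u (ℓ + 1 + r * (k * m + i) + j) = β i j)
    (a b : ℕ) (hab : ℓ + 1 = r * a + b) (hb : b < r) :
    (∀ j, j < r → j ≠ b →
      ∃ N : ℕ, 1 ≤ N ∧ ∃ d : ℕ, 1 ≤ d ∧
        ∀ n, N ≤ n → u (r * (n + d) + j) = u (r * n + j)) ∧
    (∀ m i : ℕ, i < k →
      u (r * (k * m + i + a) + b) = α (i + 1) * (u (k * m + i + 1)) ^ γ) :=
  recurrence_gamma_subsequences_general ℓ r k hk u α β γ hrec1 hrec2 a b hab hb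
end
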